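/- For any κ ≥ 1 and any E ≥ 0, the function x ↦ g(κ·g⁻¹(x) + (κ−1)·(E+1)) is increasing and convex on [0,∞). -/

import Mathlib

/-!
Write `N = g⁻¹ x` for the mean photon number of the thermal input and `M = κ N + c`, with
`c = (κ - 1)(E + 1)`, for that of the output. By the inverse function rule the derivative of
`x ↦ g (κ g⁻¹ x + c)` is `κ g'(M) / g'(N)`, where `g'(t) = log (1 + 1/t) > 0`; so the function
is increasing, and it is convex as soon as `N ↦ g'(κ N + c) / g'(N)` is increasing. Since
`g''(t) = -1 / (t (t + 1))`, the quotient rule reduces this to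
`κ N (N + 1) g'(N) ≤ M (M + 1) g'(M)`, which follows from `κ (N + 1) ≤ M + 1` (that is,
`κ - 1 ≤ c`) and the monotonicity of `t ↦ t g'(t)`, whose derivative is `g'(t) - 1 / (t + 1) ≥ 0`.
-/

open Real Set Filter

noncomputable def g (E : ℝ) : ℝ := (E + 1) * Real.log (E + 1) - E * Real.log E

noncomputable def ginv : ℝ → ℝ := Function.invFunOn g (Set.Ici 0)

noncomputable def gDeriv (t : ℝ) : ℝ := log (t + 1) - log t

noncomputable def amplifierEntropy (κ c x : ℝ) : ℝ := g (κ * ginv x + c)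

lemma g_zero : g 0 = 0 := by simp [g]

lemma continuous_g : Continuous g :=
  (continuous_mul_log.comp (continuous_id.add continuous_const)).sub continuous_mul_log

lemma hasDerivAt_g {t : ℝ} (ht : 0 < t) : HasDerivAt g (gDeriv t) t := by
  have hshift : HasDerivAt (fun x : ℝ => (x + 1) * log (x + 1)) (log (t + 1) + 1) t :=
    (hasDerivAt_mul_log (by linarith : t + 1 ≠ 0)).comp_add_const t 1
  exact (hshift.sub (hasDerivAt_mul_log ht.ne')).congr_deriv (by simp only [gDeriv]; ring)

lemma gDeriv_pos {t : ℝ} (ht : 0 < t) : 0 < gDeriv t :=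
  sub_pos.2 (log_lt_log ht (lt_add_one t))

lemma strictMonoOn_g : StrictMonoOn g (Ici 0) := by
  refine strictMonoOn_of_deriv_pos (convex_Ici 0) continuous_g.continuousOn fun t ht => ?_
  rw [interior_Ici] at ht
  rw [(hasDerivAt_g ht).deriv]
  exact gDeriv_pos ht

lemma g_nonneg {t : ℝ} (ht : 0 ≤ t) : 0 ≤ g t :=
  g_zero ▸ strictMonoOn_g.monotoneOn self_mem_Ici ht ht

lemma log_add_one_le_g {t : ℝ} (ht : 0 ≤ t) : log (t + 1) ≤ g t := by
  have hmul : 0 ≤ t * gDeriv t := by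
    rcases ht.eq_or_lt with rfl | ht
    · simp
    · exact mul_nonneg ht.le (gDeriv_pos ht).le
  have hsplit : g t = log (t + 1) + t * gDeriv t := by
    simp only [g, gDeriv]
    ring
  linarith

lemma tendsto_g_atTop : Tendsto g atTop atTop :=
  tendsto_atTop_mono' atTop
    ((eventually_ge_atTop 0).mono fun _ ht => log_add_one_le_g ht)
    (tendsto_log_atTop.comp (tendsto_atTop_add_const_right atTop 1 tendsto_id))

lemma surjOn_g : SurjOn g (Ici 0) (Ici 0) := by
  have h := intermediate_value_Ici (a := 0) continuous_g.continuousOn tendsto_g_atTop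
  rwa [g_zero] at h

lemma g_ginv {x : ℝ} (hx : 0 ≤ x) : g (ginv x) = x :=
  Function.invFunOn_eq (surjOn_g hx)

lemma ginv_nonneg {x : ℝ} (hx : 0 ≤ x) : 0 ≤ ginv x :=
  Function.invFunOn_mem (surjOn_g hx)

lemma ginv_g {t : ℝ} (ht : 0 ≤ t) : ginv (g t) = t :=
  strictMonoOn_g.injOn (ginv_nonneg (g_nonneg ht)) ht (g_ginv (g_nonneg ht))

lemma ginv_zero : ginv 0 = 0 := by
  simpa only [g_zero] using ginv_g le_rfl

lemma strictMonoOn_ginv : StrictMonoOn ginv (Ici 0) := by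
  intro x hx y hy hxy
  by_contra! h
  have := strictMonoOn_g.monotoneOn (ginv_nonneg hy) (ginv_nonneg hx) h
  rw [g_ginv hx, g_ginv hy] at this
  linarith

lemma ginv_pos {x : ℝ} (hx : 0 < x) : 0 < ginv x :=
  ginv_zero ▸ strictMonoOn_ginv self_mem_Ici hx.le hx

lemma image_ginv : ginv '' Ici 0 = Ici 0 :=
  Subset.antisymm (image_subset_iff.2 fun _ hx => ginv_nonneg hx)
    fun t ht => ⟨g t, g_nonneg ht, ginv_g ht⟩

lemma continuousAt_ginv {x : ℝ} (hx : 0 < x) : ContinuousAt ginv x :=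
  strictMonoOn_ginv.continuousAt_of_image_mem_nhds (Ici_mem_nhds hx)
    (by rw [image_ginv]; exact Ici_mem_nhds (ginv_pos hx))

lemma continuousOn_ginv : ContinuousOn ginv (Ici 0) := by
  intro x hx
  rcases (mem_Ici.1 hx).eq_or_lt with rfl | hx
  · refine strictMonoOn_ginv.continuousWithinAt_right_of_image_mem_nhdsWithin
      self_mem_nhdsWithin ?_
    rw [image_ginv, ginv_zero]
    exact self_mem_nhdsWithin
  · exact (continuousAt_ginv hx).continuousWithinAt

lemma hasDerivAt_ginv {x : ℝ} (hx : 0 < x) : HasDerivAt ginv (gDeriv (ginv x))⁻¹ x :=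
  HasDerivAt.of_local_left_inverse (continuousAt_ginv hx) (hasDerivAt_g (ginv_pos hx))
    (gDeriv_pos (ginv_pos hx)).ne'
    (eventually_of_mem (Ioi_mem_nhds hx) fun _ hy => g_ginv (Ioi_subset_Ici_self hy))

lemma inv_add_one_le_gDeriv {t : ℝ} (ht : 0 < t) : (t + 1)⁻¹ ≤ gDeriv t := by
  have h := log_le_sub_one_of_pos (div_pos ht (by linarith : 0 < t + 1))
  rw [log_div ht.ne' (by linarith)] at h
  have hfrac : t / (t + 1) - 1 = -(t + 1)⁻¹ := by
    field_simp
    ring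
  simp only [gDeriv]
  linarith

lemma hasDerivAt_gDeriv {t : ℝ} (ht : 0 < t) :
    HasDerivAt gDeriv (-(t * (t + 1))⁻¹) t := by
  have hshift : HasDerivAt (fun x : ℝ => log (x + 1)) (t + 1)⁻¹ t :=
    (hasDerivAt_log (by linarith : t + 1 ≠ 0)).comp_add_const t 1
  refine (hshift.sub (hasDerivAt_log ht.ne')).congr_deriv ?_
  field_simp
  ring

lemma monotoneOn_mul_gDeriv : MonotoneOn (fun t => t * gDeriv t) (Ioi 0) := by
  have hderiv : ∀ t ∈ Ioi (0 : ℝ),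
      HasDerivAt (fun t => t * gDeriv t) (gDeriv t - (t + 1)⁻¹) t := fun t ht => by
    refine ((hasDerivAt_id' t).mul (hasDerivAt_gDeriv ht)).congr_deriv ?_
    have ht0 : t ≠ 0 := ne_of_gt ht
    field_simp
    ring
  refine monotoneOn_of_hasDerivWithinAt_nonneg (convex_Ioi 0)
    (fun t ht => (hderiv t ht).continuousAt.continuousWithinAt)
    (fun t ht => (hderiv t (interior_subset ht)).hasDerivWithinAt) fun t ht => ?_
  rw [interior_Ioi] at ht
  exact sub_nonneg.2 (inv_add_one_le_gDeriv ht)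

lemma mul_gDeriv_le_of_le {κ N M : ℝ} (hN : 0 < N) (hNM : N ≤ M) (hκ : κ * (N + 1) ≤ M + 1) :
    κ * (N * (N + 1) * gDeriv N) ≤ M * (M + 1) * gDeriv M :=
  calc κ * (N * (N + 1) * gDeriv N) = κ * (N + 1) * (N * gDeriv N) := by ring
    _ ≤ (M + 1) * (M * gDeriv M) :=
        mul_le_mul hκ (monotoneOn_mul_gDeriv hN (hN.trans_le hNM) hNM)
          (mul_nonneg hN.le (gDeriv_pos hN).le) (by linarith)
    _ = M * (M + 1) * gDeriv M := by ring

lemma monotoneOn_gDeriv_affine_div_gDeriv {κ c : ℝ} (hκ : 1 ≤ κ) (hc : κ - 1 ≤ c) :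
    MonotoneOn (fun N => gDeriv (κ * N + c) / gDeriv N) (Ioi 0) := by
  have hM : ∀ N ∈ Ioi (0 : ℝ), N ≤ κ * N + c := fun N hN => by nlinarith [mem_Ioi.1 hN]
  have hderiv : ∀ N ∈ Ioi (0 : ℝ), HasDerivAt (fun N => gDeriv (κ * N + c) / gDeriv N)
      ((-((κ * N + c) * (κ * N + c + 1))⁻¹ * κ * gDeriv N
        - gDeriv (κ * N + c) * -(N * (N + 1))⁻¹) / gDeriv N ^ 2) N := fun N hN => by
    have haffine : HasDerivAt (fun N => κ * N + c) κ N := by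
      simpa using ((hasDerivAt_id' N).const_mul κ).add_const c
    exact ((hasDerivAt_gDeriv (lt_of_lt_of_le hN (hM N hN))).comp N haffine).div
      (hasDerivAt_gDeriv hN) (gDeriv_pos hN).ne'
  refine monotoneOn_of_hasDerivWithinAt_nonneg (convex_Ioi 0)
    (fun N hN => (hderiv N hN).continuousAt.continuousWithinAt)
    (fun N hN => (hderiv N (interior_subset hN)).hasDerivWithinAt) fun N hN => ?_
  rw [interior_Ioi] at hN
  set M := κ * N + c with hMdef
  have hN0 : 0 < N := hN
  have hM0 : 0 < M := lt_of_lt_of_le hN0 (hM N hN)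
  have key := mul_gDeriv_le_of_le (κ := κ) hN0 (hM N hN) (by linarith)
  have hnum : -(M * (M + 1))⁻¹ * κ * gDeriv N - gDeriv M * -(N * (N + 1))⁻¹ =
      (M * (M + 1) * gDeriv M - κ * (N * (N + 1) * gDeriv N)) / (N * (N + 1) * (M * (M + 1))) := by
    field_simp
    ring
  rw [hnum]
  exact div_nonneg (div_nonneg (sub_nonneg.2 key) (by positivity)) (sq_nonneg _)

lemma continuousOn_amplifierEntropy (κ c : ℝ) : ContinuousOn (amplifierEntropy κ c) (Ici 0) :=
  continuous_g.comp_continuousOn ((continuousOn_const.mul continuousOn_ginv).add continuousOn_const)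

lemma monotoneOn_amplifierEntropy {κ c : ℝ} (hκ : 0 ≤ κ) (hc : 0 ≤ c) :
    MonotoneOn (amplifierEntropy κ c) (Ici 0) := fun x hx y hy hxy => by
  have hN : ginv x ≤ ginv y := strictMonoOn_ginv.monotoneOn hx hy hxy
  have hMx : 0 ≤ κ * ginv x + c := by nlinarith [ginv_nonneg (mem_Ici.1 hx)]
  have hMy : 0 ≤ κ * ginv y + c := by nlinarith
  exact strictMonoOn_g.monotoneOn hMx hMy (by nlinarith)

lemma hasDerivAt_amplifierEntropy {κ c x : ℝ} (hκ : 0 < κ) (hc : 0 ≤ c) (hx : 0 < x) :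
    HasDerivAt (amplifierEntropy κ c) (κ * (gDeriv (κ * ginv x + c) / gDeriv (ginv x))) x := by
  have hM : 0 < κ * ginv x + c := by nlinarith [ginv_pos hx]
  refine ((hasDerivAt_g hM).comp x (((hasDerivAt_ginv hx).const_mul κ).add_const c)).congr_deriv ?_
  ring

lemma convexOn_amplifierEntropy {κ c : ℝ} (hκ : 1 ≤ κ) (hc : κ - 1 ≤ c) :
    ConvexOn ℝ (Ici 0) (amplifierEntropy κ c) := by
  have hderiv : ∀ x ∈ Ioi (0 : ℝ), HasDerivAt (amplifierEntropy κ c)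
      (κ * (gDeriv (κ * ginv x + c) / gDeriv (ginv x))) x := fun x hx =>
    hasDerivAt_amplifierEntropy (by linarith) (by linarith) hx
  have hmono : MonotoneOn (fun x => κ * (gDeriv (κ * ginv x + c) / gDeriv (ginv x))) (Ioi 0) :=
    fun x hx y hy hxy => mul_le_mul_of_nonneg_left
      (monotoneOn_gDeriv_affine_div_gDeriv hκ hc (ginv_pos hx) (ginv_pos hy)
        (strictMonoOn_ginv.monotoneOn (Ioi_subset_Ici_self hx) (Ioi_subset_Ici_self hy) hxy))
      (by linarith)
  refine MonotoneOn.convexOn_of_deriv (convex_Ici 0) (continuousOn_amplifierEntropy κ c) ?_ ?_ <;>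
    rw [interior_Ici]
  · exact fun x hx => (hderiv x hx).differentiableAt.differentiableWithinAt
  · exact hmono.congr fun x hx => (hderiv x hx).deriv.symm

theorem amplifier_thermal_entropy_monotone_convex (κ E : ℝ) (hκ : 1 ≤ κ) (hE : 0 ≤ E) :
    MonotoneOn (fun x => g (κ * ginv x + (κ - 1) * (E + 1))) (Set.Ici 0) ∧
      ConvexOn ℝ (Set.Ici 0) (fun x => g (κ * ginv x + (κ - 1) * (E + 1))) := by
  have hc : κ - 1 ≤ (κ - 1) * (E + 1) := by nlinarith
  exact ⟨monotoneOn_amplifierEntropy (by linarith) (by linarith), convexOn_amplifierEntropy hκ hc⟩
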